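/- Let V be a finite-dimensional real vector space, V = V₊ ⊕ V₋ a Q-orthogonal decomposition with Q positive definite on V₊ and negative definite on V₋. Suppose ω ∈ V₊ with ω ≠ 0, and v = α₊ + α₋ ∈ V satisfies Q(v, v) ≥ 0, Q(ω, v) = 0, and v ≠ 0. Then ω and α₊ are linearly independent elements of V₊; in particular dim V₊ ≥ 2. -/
import Mathlib


/-- In a `Q`-orthogonal decomposition `V = V₊ ⊕ V₋` (`Q` positive definite on
`V₊`, negative definite on `V₋`), if `ω ∈ V₊` is nonzero and `v = α₊ + α₋` is nonzero with
`Q v v ≥ 0` and `Q ω v = 0`, then `ω` and `α₊` are linearly independent in `V₊`; in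
particular `dim V₊ ≥ 2`. -/
theorem stmt_5 {V : Type*} [AddCommGroup V] [Module ℝ V] [FiniteDimensional ℝ V]
    (Vp Vm : Submodule ℝ V) (hcompl : IsCompl Vp Vm)
    (Q : LinearMap.BilinForm ℝ V) (hsymm : ∀ x y, Q x y = Q y x)
    (hpos : ∀ x ∈ Vp, x ≠ 0 → 0 < Q x x)
    (hneg : ∀ x ∈ Vm, x ≠ 0 → Q x x < 0)
    (horth : ∀ α ∈ Vp, ∀ β ∈ Vm, Q α β = 0)
    (ω : V) (hω : ω ∈ Vp) (hω0 : ω ≠ 0)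
    (v αp αm : V) (hαp : αp ∈ Vp) (hαm : αm ∈ Vm) (hsum : v = αp + αm)
    (hQv : 0 ≤ Q v v) (hωv : Q ω v = 0) (hv : v ≠ 0) :
    LinearIndependent ℝ ![ω, αp] ∧ 2 ≤ Module.finrank ℝ Vp := by
  -- αp ≠ 0
  have hαp0 : αp ≠ 0 := by
    intro h
    subst h
    simp only [zero_add] at hsum
    rw [hsum] at hQv hv
    rcases eq_or_ne αm 0 with h0 | h0
    · exact hv h0
    · exact absurd hQv (not_le.mpr (hneg αm hαm h0))
  -- Q ω αp = 0
  have hωαp : Q ω αp = 0 := by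
    have := horth ω hω αm hαm
    rw [hsum, map_add] at hωv
    linarith
  have hli : LinearIndependent ℝ ![ω, αp] := by
    rw [LinearIndependent.pair_iff]
    intro s t hst
    have h1 : Q ω (s • ω + t • αp) = 0 := by rw [hst]; simp
    simp only [map_add, map_smul, smul_eq_mul, hωαp, mul_zero, add_zero] at h1
    have hQω : 0 < Q ω ω := hpos ω hω hω0
    have hs : s = 0 := by
      rcases mul_eq_zero.mp h1 with h | h
      · exact h
      · exact absurd h hQω.ne'
    subst hs
    simp only [zero_smul, zero_add] at hst
    refine ⟨rfl, ?_⟩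
    by_contra ht
    exact hαp0 (by simpa [smul_eq_zero, ht] using hst)
  refine ⟨hli, ?_⟩
  let w : Fin 2 → Vp := ![⟨ω, hω⟩, ⟨αp, hαp⟩]
  have hw : LinearIndependent ℝ w := by
    apply LinearIndependent.of_comp Vp.subtype
    have : Vp.subtype ∘ w = ![ω, αp] := by
      funext i
      fin_cases i <;> rfl
    rw [this]
    exact hli
  simpa using hw.fintype_card_le_finrank
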